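/- arXiv:2409.12824 — 7 statements merged into one kernel-verified Lean document; each statement's English description precedes it below -/
import Mathlib

section
/- Theorem 1 (per-agent core, exact data). Fix T, n, m ∈ ℕ with n ≥ 1. Let X ∈ ℝ^{n×T}, U ∈ ℝ^{m×T} and G ∈ ℝ^{n×T} be given, and assume there exists at least one pair (A,B) ∈ ℝ^{n×n}×ℝ^{n×m} that is consistent with the data, i.e. AX + BU = G. Then the following are equivalent: (i) the data are informative for stabilizability, i.e. there exists K ∈ ℝ^{m×n} such that A + BK is Hurwitz for every pair (A,B) with AX + BU = G; (ii) there exists a right inverse X⁺ ∈ ℝ^{T×n} of X (i.e. X X⁺ = Iₙ) such that G X⁺ is Hurwitz. Moreover, when (ii) holds, K = U X⁺ is such a common stabilizing gain. -/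
/-!
If `K` stabilises every consistent pair, then every vector `(ξ, η)` in the left kernel of the
stacked data `[X; U]` satisfies `ξ + Kᵀ η = 0`: otherwise, with `w = ξ + Kᵀ η`, perturbing a
consistent pair `(A, B)` by `(t w ξᵀ, t w ηᵀ)` keeps it consistent but adds `t ‖w‖²` to the trace
of `A + B K`, whereas the trace of a Hurwitz matrix is negative. Hence `[X; U] X⁺ = [I; K]` for
some `X⁺`, and then `G X⁺ = A + B K`. Conversely `A + B U X⁺ = (A X + B U) X⁺ = G X⁺`.
-/

open Matrix

/-- A real square matrix is Hurwitz (stable) if every eigenvalue over `ℂ`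
(i.e. every root of its characteristic polynomial over `ℂ`) has negative real part. -/
def IsHurwitz {ι : Type} [Fintype ι] [DecidableEq ι] (M : Matrix ι ι ℝ) : Prop :=
  ∀ z : ℂ, (M.map Complex.ofReal).charpoly.IsRoot z → z.re < 0

theorem IsHurwitz.trace_neg {ι : Type} [Fintype ι] [DecidableEq ι] [Nonempty ι]
    {M : Matrix ι ι ℝ} (hM : IsHurwitz M) : M.trace < 0 := by
  set p := (M.map Complex.ofReal).charpoly
  have hroots : p.roots ≠ 0 := by
    rw [← Multiset.card_pos, IsAlgClosed.card_roots_eq_natDegree, charpoly_natDegree_eq_dim]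
    exact Fintype.card_pos
  have htrace : (M.trace : ℂ) = p.roots.sum := by
    rw [← trace_eq_sum_roots_charpoly, ← Complex.ofRealHom_eq_coe, AddMonoidHom.map_trace]
    rfl
  calc M.trace = (p.roots.map Complex.re).sum := by
        rw [← Complex.ofReal_re M.trace, htrace, ← Complex.coe_reAddGroupHom,
          map_multiset_sum]
    _ < (p.roots.map fun _ => (0 : ℝ)).sum :=
        Multiset.sum_lt_sum_of_nonempty hroots fun z hz => hM z (Polynomial.isRoot_of_mem_roots hz)
    _ = 0 := by simp

theorem LinearMap.exists_comp_eq_of_ker_le {K V W P : Type*} [Field K] [AddCommGroup V]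
    [Module K V] [AddCommGroup W] [Module K W] [AddCommGroup P] [Module K P]
    (f : V →ₗ[K] W) (g : V →ₗ[K] P) (hker : LinearMap.ker f ≤ LinearMap.ker g) :
    ∃ h : W →ₗ[K] P, h ∘ₗ f = g := by
  obtain ⟨h, hh⟩ := LinearMap.exists_extend
    ((LinearMap.ker f).liftQ g hker ∘ₗ f.quotKerEquivRange.symm.toLinearMap)
  refine ⟨h, LinearMap.ext fun x => ?_⟩
  simpa using LinearMap.congr_fun hh ⟨f x, LinearMap.mem_range_self f x⟩

theorem Matrix.exists_mul_eq_of_forall_vecMul_eq_zero {K ι κ μ : Type*} [Field K]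
    [Fintype ι] [Fintype κ] (Z : Matrix ι κ K) (L : Matrix ι μ K)
    (hZL : ∀ v, v ᵥ* Z = 0 → v ᵥ* L = 0) : ∃ P : Matrix κ μ K, Z * P = L := by
  classical
  obtain ⟨h, hh⟩ := LinearMap.exists_comp_eq_of_ker_le (toLin' Zᵀ) (toLin' Lᵀ)
    fun v hv => by simpa [mulVec_transpose] using hZL v (by simpa [mulVec_transpose] using hv)
  refine ⟨(LinearMap.toMatrix' h)ᵀ, ?_⟩
  have := congrArg LinearMap.toMatrix' hh
  rw [LinearMap.toMatrix'_comp, LinearMap.toMatrix'_toLin', LinearMap.toMatrix'_toLin'] at this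
  rw [← transpose_transpose L, ← this, transpose_mul, transpose_transpose]

theorem Matrix.vecMul_eq_zero_of_forall_trace_mul_neg {ι α β : Type*} [Fintype ι]
    [Fintype α] (Z : Matrix α β ℝ) (L : Matrix α ι ℝ) (G : Matrix ι β ℝ) (F₀ : Matrix ι α ℝ)
    (hF₀ : F₀ * Z = G) (htr : ∀ F : Matrix ι α ℝ, F * Z = G → (F * L).trace < 0) (v : α → ℝ)
    (hv : v ᵥ* Z = 0) : v ᵥ* L = 0 := by
  set w := v ᵥ* L
  have hline : ∀ t : ℝ, (F₀ * L).trace + t * (w ⬝ᵥ w) < 0 := fun t => by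
    have hF : (F₀ + t • vecMulVec w v) * Z = G := by
      rw [Matrix.add_mul, smul_mul, vecMulVec_mul, hv, ← hF₀]
      ext i j
      simp [vecMulVec_apply]
    simpa [Matrix.add_mul, smul_mul, vecMulVec_mul] using htr _ hF
  by_contra hw
  have hpos : 0 < w ⬝ᵥ w := by simpa using dotProduct_self_star_pos_iff.mpr hw
  have := hline ((1 - (F₀ * L).trace) / (w ⬝ᵥ w))
  rw [div_mul_cancel₀ _ hpos.ne'] at this
  linarith

theorem Matrix.add_mul_mul_eq_mul_of_mul_eq_one {R ι κ τ : Type*} [Semiring R] [Fintype ι]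
    [Fintype κ] [Fintype τ] [DecidableEq ι]
    {X G : Matrix ι τ R} {U : Matrix κ τ R} {Xp : Matrix τ ι R} {A : Matrix ι ι R}
    {B : Matrix ι κ R} (hXp : X * Xp = 1) (hAB : A * X + B * U = G) :
    A + B * (U * Xp) = G * Xp := by
  rw [← hAB, Matrix.add_mul, Matrix.mul_assoc, hXp, Matrix.mul_one, Matrix.mul_assoc]

/-- Theorem 1 (per-agent core, exact data): informativity for stabilizability is
equivalent to the existence of a right inverse `X⁺` of `X` with `G X⁺` Hurwitz;
moreover `K = U X⁺` is then a common stabilizing gain. -/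
theorem stmt_0 (T n m : ℕ) (hn : 1 ≤ n)
    (X G : Matrix (Fin n) (Fin T) ℝ) (U : Matrix (Fin m) (Fin T) ℝ)
    (hcons : ∃ (A : Matrix (Fin n) (Fin n) ℝ) (B : Matrix (Fin n) (Fin m) ℝ),
      A * X + B * U = G) :
    ((∃ K : Matrix (Fin m) (Fin n) ℝ,
        ∀ (A : Matrix (Fin n) (Fin n) ℝ) (B : Matrix (Fin n) (Fin m) ℝ),
          A * X + B * U = G → IsHurwitz (A + B * K)) ↔
      (∃ Xp : Matrix (Fin T) (Fin n) ℝ, X * Xp = 1 ∧ IsHurwitz (G * Xp))) ∧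
    (∀ Xp : Matrix (Fin T) (Fin n) ℝ, X * Xp = 1 → IsHurwitz (G * Xp) →
      ∀ (A : Matrix (Fin n) (Fin n) ℝ) (B : Matrix (Fin n) (Fin m) ℝ),
        A * X + B * U = G → IsHurwitz (A + B * (U * Xp))) := by
  have hgain : ∀ Xp : Matrix (Fin T) (Fin n) ℝ, X * Xp = 1 → IsHurwitz (G * Xp) →
      ∀ (A : Matrix (Fin n) (Fin n) ℝ) (B : Matrix (Fin n) (Fin m) ℝ),
        A * X + B * U = G → IsHurwitz (A + B * (U * Xp)) :=
    fun Xp hXp hH A B hAB => add_mul_mul_eq_mul_of_mul_eq_one hXp hAB ▸ hH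
  refine ⟨⟨fun ⟨K, hK⟩ => ?_, fun ⟨Xp, hXp, hH⟩ => ⟨U * Xp, hgain Xp hXp hH⟩⟩, hgain⟩
  have : Nonempty (Fin n) := Fin.pos_iff_nonempty.mp hn
  obtain ⟨A₀, B₀, h₀⟩ := hcons
  have htr : ∀ F : Matrix (Fin n) (Fin n ⊕ Fin m) ℝ, F * fromRows X U = G →
      (F * fromRows (1 : Matrix (Fin n) (Fin n) ℝ) K).trace < 0 := fun F hF => by
    obtain ⟨A, B, rfl⟩ : ∃ A B, F = fromCols A B := ⟨_, _, (fromCols_toCols F).symm⟩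
    rw [fromCols_mul_fromRows] at hF ⊢
    simpa using (hK _ _ hF).trace_neg
  obtain ⟨Xp, hXp⟩ := exists_mul_eq_of_forall_vecMul_eq_zero (fromRows X U) (fromRows 1 K)
    (vecMul_eq_zero_of_forall_trace_mul_neg _ _ G (fromCols A₀ B₀)
      (by rw [fromCols_mul_fromRows, h₀]) htr)
  obtain ⟨hXXp, hUXp⟩ := fromRows_inj (fromRows_mul X U Xp ▸ hXp)
  refine ⟨Xp, hXXp, ?_⟩
  rw [← add_mul_mul_eq_mul_of_mul_eq_one hXXp h₀, hUXp]
  exact hK A₀ B₀ h₀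
end

section
/- M-matrix eigenvalue bound (inequality min Re(λ_H) ≥ 1/‖H⁻¹‖_∞ used in the proof of Theorem 3). Let N ≥ 1 and let H ∈ ℝ^{N×N} be an invertible matrix with H_{ij} ≤ 0 for all i ≠ j and with H⁻¹ entrywise nonnegative. Then every eigenvalue ν of H over ℂ satisfies Re ν ≥ 1/‖H⁻¹‖_∞, where ‖A‖_∞ = max_i Σ_j |A_{ij}| is the maximum absolute row-sum norm. -/
/-!
Put `w := H⁻¹ 1`. Each row of the nonnegative invertible matrix `H⁻¹` is nonzero, so `w > 0`, and
`H w = 1`. Conjugating `H` by `diag w` does not change its eigenvalues, and the Gershgorin disc of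
row `k` of the conjugated matrix has centre `H k k` and, since the off-diagonal entries are
nonpositive, radius `Σ_{j ≠ k} |H k j| w j / w k = H k k - 1 / w k`. Hence every eigenvalue has
real part at least `1 / w k ≥ 1 / max_i w i = 1 / ‖H⁻¹‖_∞`.
-/

open Matrix

theorem Matrix.charpoly_diagonal_inv_mul_mul_diagonal {K n : Type*} [Field K] [Fintype n]
    [DecidableEq n] (A : Matrix n n K) {w : n → K} (hw : ∀ i, w i ≠ 0) :
    (diagonal w⁻¹ * A * diagonal w).charpoly = A.charpoly := by
  have hww : (fun i => w i * w⁻¹ i) = fun _ => 1 := funext fun i => mul_inv_cancel₀ (hw i)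
  rw [mul_assoc, charpoly_mul_comm, mul_assoc, diagonal_mul_diagonal, hww, diagonal_one, mul_one]

theorem Matrix.exists_norm_sub_diag_mul_le_of_isRoot_charpoly {K n : Type*} [NormedField K]
    [Fintype n] [DecidableEq n] {A : Matrix n n K} {μ : K} (hμ : A.charpoly.IsRoot μ)
    {w : n → K} (hw : ∀ i, w i ≠ 0) :
    ∃ k, ‖μ - A k k‖ * ‖w k‖ ≤ ∑ j ∈ Finset.univ.erase k, ‖A k j‖ * ‖w j‖ := by
  set B := diagonal w⁻¹ * A * diagonal w
  have hB : ∀ k j, B k j = A k j * w j / w k := fun k j => by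
    simp only [B, diagonal_mul, mul_diagonal, Pi.inv_apply]
    ring
  have hμB : Module.End.HasEigenvalue (toLin' B) μ := by
    rwa [Module.End.hasEigenvalue_iff_mem_spectrum, spectrum_toLin',
      mem_spectrum_iff_isRoot_charpoly, charpoly_diagonal_inv_mul_mul_diagonal A hw]
  obtain ⟨k, hk⟩ := eigenvalue_mem_ball hμB
  refine ⟨k, (le_div_iff₀ (norm_pos_iff.mpr (hw k))).mp ?_⟩
  simpa only [mem_closedBall_iff_norm, hB, mul_div_cancel_right₀ _ (hw k), norm_div, norm_mul,
    Finset.sum_div] using hk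

theorem Matrix.sum_row_pos_of_isUnit_det_of_nonneg {R n : Type*} [CommRing R] [PartialOrder R]
    [IsOrderedRing R] [Nontrivial R] [Fintype n] [DecidableEq n] {M : Matrix n n R}
    (hM : IsUnit M.det) (hnonneg : ∀ i j, 0 ≤ M i j) (i : n) : 0 < ∑ j, M i j := by
  refine (Finset.sum_nonneg fun j _ => hnonneg i j).lt_of_ne fun hzero => hM.ne_zero ?_
  have hrow := (Finset.sum_eq_zero_iff_of_nonneg fun j _ => hnonneg i j).mp hzero.symm
  exact det_eq_zero_of_row_eq_zero i fun j => hrow j (Finset.mem_univ j)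

theorem Matrix.sum_erase_abs_mul_eq_of_offDiag_nonpos {R n : Type*} [CommRing R] [LinearOrder R]
    [IsOrderedRing R] [Fintype n] [DecidableEq n] {H : Matrix n n R}
    (hoff : ∀ i j, i ≠ j → H i j ≤ 0) (w : n → R) (i : n) :
    ∑ j ∈ Finset.univ.erase i, |H i j| * w j = H i i * w i - (H *ᵥ w) i := by
  rw [mulVec, dotProduct, ← Finset.add_sum_erase _ _ (Finset.mem_univ i), sub_add_cancel_left,
    ← Finset.sum_neg_distrib]
  refine Finset.sum_congr rfl fun j hj => ?_
  rw [abs_of_nonpos (hoff i j (Finset.ne_of_mem_erase hj).symm), neg_mul]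

theorem Matrix.exists_one_div_sum_row_inv_le_re {n : Type*} [Fintype n] [DecidableEq n]
    {H : Matrix n n ℝ} (hH : IsUnit H.det) (hoff : ∀ i j, i ≠ j → H i j ≤ 0)
    (hinv : ∀ i j, 0 ≤ H⁻¹ i j) {ν : ℂ} (hν : (H.map Complex.ofReal).charpoly.IsRoot ν) :
    ∃ k, 1 / ∑ j, H⁻¹ k j ≤ ν.re := by
  set w : n → ℝ := fun i => ∑ j, H⁻¹ i j
  have hw_pos : ∀ i, 0 < w i :=
    sum_row_pos_of_isUnit_det_of_nonneg (isUnit_nonsing_inv_det H hH) hinv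
  have hHw : H *ᵥ w = 1 := by
    have hw : w = H⁻¹ *ᵥ 1 := funext fun i => by simp [w, mulVec, dotProduct]
    rw [hw, mulVec_mulVec, mul_nonsing_inv H hH, one_mulVec]
  obtain ⟨k, hk⟩ := exists_norm_sub_diag_mul_le_of_isRoot_charpoly hν
    (w := fun i => (w i : ℂ)) fun i => Complex.ofReal_ne_zero.mpr (hw_pos i).ne'
  simp only [map_apply, Complex.norm_real, Real.norm_eq_abs,
    abs_of_pos (hw_pos _), sum_erase_abs_mul_eq_of_offDiag_nonpos hoff, hHw, Pi.one_apply] at hk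
  have hre : H k k - ν.re ≤ ‖ν - H k k‖ := by
    simpa [norm_sub_rev] using Complex.re_le_norm (H k k - ν)
  refine ⟨k, (div_le_iff₀ (hw_pos k)).mpr ?_⟩
  nlinarith [mul_le_mul_of_nonneg_right hre (hw_pos k).le]

theorem stmt_4_general (N : ℕ)
    (H : Matrix (Fin N) (Fin N) ℝ) (hHinv : IsUnit H.det)
    (hoff : ∀ i j : Fin N, i ≠ j → H i j ≤ 0)
    (hinvnonneg : ∀ i j : Fin N, 0 ≤ H⁻¹ i j) :
    ∀ v : ℂ, (H.map Complex.ofReal).charpoly.IsRoot v →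
      1 / (⨆ i : Fin N, ∑ j : Fin N, |H⁻¹ i j|) ≤ v.re := by
  intro v hv
  obtain ⟨k, hk⟩ := exists_one_div_sum_row_inv_le_re hHinv hoff hinvnonneg hv
  have hrow : ∀ i, ∑ j, |H⁻¹ i j| = ∑ j, H⁻¹ i j := fun i =>
    Finset.sum_congr rfl fun j _ => abs_of_nonneg (hinvnonneg i j)
  calc 1 / (⨆ i, ∑ j, |H⁻¹ i j|) ≤ 1 / ∑ j, H⁻¹ k j := by
        simp only [hrow]
        exact one_div_le_one_div_of_le
          (sum_row_pos_of_isUnit_det_of_nonneg (isUnit_nonsing_inv_det H hHinv) hinvnonneg k)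
          (le_ciSup (f := fun i => ∑ j, H⁻¹ i j) (Finite.bddAbove_range _) k)
    _ ≤ v.re := hk

/-- M-matrix eigenvalue bound: if `H` has nonpositive off-diagonal entries and an
entrywise nonnegative inverse, then every eigenvalue `ν` of `H` over `ℂ` satisfies
`Re ν ≥ 1 / ‖H⁻¹‖_∞`, where `‖A‖_∞ = max_i Σ_j |A i j|` is the maximum absolute
row-sum norm. -/
theorem stmt_4 (N : ℕ) (hN : 1 ≤ N)
    (H : Matrix (Fin N) (Fin N) ℝ) (hHinv : IsUnit H.det)
    (hoff : ∀ i j : Fin N, i ≠ j → H i j ≤ 0)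
    (hinvnonneg : ∀ i j : Fin N, 0 ≤ H⁻¹ i j) :
    ∀ v : ℂ, (H.map Complex.ofReal).charpoly.IsRoot v →
      1 / (⨆ i : Fin N, ∑ j : Fin N, |H⁻¹ i j|) ≤ v.re :=
  stmt_4_general N H hHinv hoff hinvnonneg
end

section
/- Proposition 1 (unknown exosystem matrix, conditional matrix form). Let N, q ≥ 1, ε₁, ε₂, ε > 0. Let H ∈ ℝ^{N×N} be a matrix every eigenvalue ν of which satisfies Re ν ≥ ε₁^N / (N·(2ε₂)^{N−1}), and let S ∈ ℝ^{q×q} be a matrix all of whose entries satisfy |S_{ij}| ≤ ε. If the real number μ satisfies μ > q·ε·N·(2ε₂)^{N−1} / ε₁^N, then the matrix I_N ⊗ S − μ (H ⊗ I_q) is Hurwitz. (In particular the proof shows that every eigenvalue λ of S satisfies Re λ ≤ ‖S‖_∞ ≤ qε.) -/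
open Matrix
open scoped Kronecker

/-!
Since `I ⊗ S` and `H ⊗ I` commute, `I ⊗ S` preserves every eigenspace of
`I ⊗ S − μ (H ⊗ I)`, so an eigenvalue `z` of the latter splits as `z = λ − μν` with `λ` an
eigenvalue of `S` and `ν` one of `H`. Gershgorin's theorem gives `Re λ ≤ |λ| ≤ qε`, and
`Re ν ≥ ε₁^N / (N (2ε₂)^(N-1))`, so the lower bound on `μ` forces `Re z < 0`.
-/

namespace Module.End

variable {K V : Type*} [Field K] [AddCommGroup V] [Module K V]

theorem HasEigenvalue.of_smul {f : End K V} {c β : K} (hc : c ≠ 0)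
    (h : (c • f).HasEigenvalue β) : f.HasEigenvalue (β / c) := by
  obtain ⟨x, hx⟩ := h.exists_hasEigenvector
  refine hasEigenvalue_of_hasEigenvector ⟨mem_eigenspace_iff.2 ?_, hx.2⟩
  have hfx : c • f x = β • x := hx.apply_eq_smul
  rw [div_eq_inv_mul, mul_smul, ← hfx, smul_smul, inv_mul_cancel₀ hc, one_smul]

theorem HasEigenvalue.exists_add_of_commute [IsAlgClosed K] [FiniteDimensional K V]
    {f g : End K V} (hfg : Commute f g) {z : K} (hz : (f + g).HasEigenvalue z) :
    ∃ α, f.HasEigenvalue α ∧ g.HasEigenvalue (z - α) := by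
  set E := (f + g).eigenspace z
  have hfE : Set.MapsTo f E E :=
    mapsTo_genEigenspace_of_comm ((Commute.refl f).add_left hfg.symm) z 1
  have : Nontrivial E := Submodule.nontrivial_iff_ne_bot.2 hz
  obtain ⟨α, hα⟩ := exists_eigenvalue (f.restrict hfE)
  obtain ⟨⟨w, hwE⟩, hw⟩ := hα.exists_hasEigenvector
  have hw0 : w ≠ 0 := fun h => hw.2 (Subtype.ext h)
  have hfw : f w = α • w := congrArg Subtype.val hw.apply_eq_smul
  have hgw : g w = (z - α) • w := by
    have hsum : f w + g w = z • w := mem_eigenspace_iff.1 hwE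
    rw [sub_smul, ← hfw, ← hsum, add_sub_cancel_left]
  exact ⟨α, hasEigenvalue_of_hasEigenvector ⟨mem_eigenspace_iff.2 hfw, hw0⟩,
    hasEigenvalue_of_hasEigenvector ⟨mem_eigenspace_iff.2 hgw, hw0⟩⟩

end Module.End

namespace Matrix

open Module.End

variable {l m : Type*} [DecidableEq l] [DecidableEq m]

theorem map_ofReal_one_kronecker_sub_smul_kronecker_one (S : Matrix m m ℝ) (H : Matrix l l ℝ)
    (μ : ℝ) :
    ((1 : Matrix l l ℝ) ⊗ₖ S - μ • (H ⊗ₖ (1 : Matrix m m ℝ))).map Complex.ofReal =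
      (1 : Matrix l l ℂ) ⊗ₖ S.map Complex.ofReal
        + (-(μ : ℂ)) • (H.map Complex.ofReal ⊗ₖ (1 : Matrix m m ℂ)) := by
  ext ⟨a, b⟩ ⟨c, d⟩
  simp [kroneckerMap_apply, one_apply, apply_ite Complex.ofReal, sub_eq_add_neg]

variable [Fintype l] [Fintype m]

theorem hasEigenvalue_toLin'_iff_isRoot_charpoly {R : Type*} [CommRing R] [IsDomain R]
    (A : Matrix m m R) (μ : R) : HasEigenvalue (toLin' A) μ ↔ A.charpoly.IsRoot μ := by
  rw [hasEigenvalue_iff_isRoot_charpoly, charpoly_toLin']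

theorem norm_le_card_mul_of_hasEigenvalue {K : Type*} [NormedField K] {A : Matrix m m K} {ε : ℝ}
    (hA : ∀ i j, ‖A i j‖ ≤ ε) {μ : K} (hμ : HasEigenvalue (toLin' A) μ) :
    ‖μ‖ ≤ Fintype.card m * ε := by
  obtain ⟨k, hk⟩ := eigenvalue_mem_ball hμ
  rw [Metric.mem_closedBall, dist_eq_norm] at hk
  calc ‖μ‖ ≤ ‖A k k‖ + ‖μ - A k k‖ := norm_le_norm_add_norm_sub' μ (A k k)
    _ ≤ ∑ j, ‖A k j‖ := by rw [← Finset.add_sum_erase _ _ (Finset.mem_univ k)]; gcongr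
    _ ≤ ∑ _j : m, ε := Finset.sum_le_sum fun j _ => hA k j
    _ = Fintype.card m * ε := by simp

variable {R : Type*} [CommRing R]

theorem commute_one_kronecker_kronecker_one (S : Matrix m m R) (H : Matrix l l R) :
    Commute ((1 : Matrix l l R) ⊗ₖ S) (H ⊗ₖ (1 : Matrix m m R)) := by
  simp only [Commute, SemiconjBy, ← mul_kronecker_mul, one_mul, mul_one]

theorem hasEigenvalue_of_one_kronecker {S : Matrix m m R} {α : R}
    (h : HasEigenvalue (toLin' ((1 : Matrix l l R) ⊗ₖ S)) α) : HasEigenvalue (toLin' S) α := by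
  obtain ⟨w, hw⟩ := h.exists_hasEigenvector
  obtain ⟨⟨i, j⟩, hij⟩ := Function.ne_iff.1 hw.2
  refine hasEigenvalue_of_hasEigenvector (x := fun k => w (i, k))
    ⟨mem_eigenspace_iff.2 ?_, Function.ne_iff.2 ⟨j, hij⟩⟩
  ext k
  have := congrFun hw.apply_eq_smul (i, k)
  simpa [mulVec, dotProduct, Fintype.sum_prod_type, kroneckerMap_apply, one_apply, ite_mul]
    using this

theorem hasEigenvalue_of_kronecker_one {H : Matrix l l R} {α : R}
    (h : HasEigenvalue (toLin' (H ⊗ₖ (1 : Matrix m m R))) α) : HasEigenvalue (toLin' H) α := by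
  obtain ⟨w, hw⟩ := h.exists_hasEigenvector
  obtain ⟨⟨i, j⟩, hij⟩ := Function.ne_iff.1 hw.2
  refine hasEigenvalue_of_hasEigenvector (x := fun k => w (k, j))
    ⟨mem_eigenspace_iff.2 ?_, Function.ne_iff.2 ⟨i, hij⟩⟩
  ext k
  have := congrFun hw.apply_eq_smul (k, j)
  simpa [mulVec, dotProduct, Fintype.sum_prod_type, kroneckerMap_apply, one_apply, mul_ite]
    using this

end Matrix

theorem stmt_6_general (N q : ℕ) (hN : 1 ≤ N)
    (ε₁ ε₂ ε : ℝ) (hε₁ : 0 < ε₁) (hε₂ : 0 < ε₂)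
    (H : Matrix (Fin N) (Fin N) ℝ)
    (hH : ∀ v : ℂ, (H.map Complex.ofReal).charpoly.IsRoot v →
      ε₁ ^ N / (N * (2 * ε₂) ^ (N - 1)) ≤ v.re)
    (S : Matrix (Fin q) (Fin q) ℝ) (hS : ∀ i j : Fin q, |S i j| ≤ ε)
    (μ : ℝ) (hμ : q * ε * N * (2 * ε₂) ^ (N - 1) / ε₁ ^ N < μ) :
    (∀ l : ℂ, (S.map Complex.ofReal).charpoly.IsRoot l → l.re ≤ q * ε) ∧
    IsHurwitz ((1 : Matrix (Fin N) (Fin N) ℝ) ⊗ₖ S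
      - μ • (H ⊗ₖ (1 : Matrix (Fin q) (Fin q) ℝ))) := by
  have hc : 0 < ε₁ ^ N / (N * (2 * ε₂) ^ (N - 1)) := by
    have : (0 : ℝ) < N := by exact_mod_cast hN
    positivity
  have hμc : q * ε < μ * (ε₁ ^ N / (N * (2 * ε₂) ^ (N - 1))) := by
    rwa [← div_lt_iff₀ hc, div_div_eq_mul_div, ← mul_assoc]
  have hS_eig : ∀ l, Module.End.HasEigenvalue (toLin' (S.map Complex.ofReal)) l → ‖l‖ ≤ q * ε :=
    fun l hl => by
      simpa using norm_le_card_mul_of_hasEigenvalue (fun i j => by simpa using hS i j) hl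
  refine ⟨fun l hl => (Complex.re_le_norm l).trans
    (hS_eig l ((hasEigenvalue_toLin'_iff_isRoot_charpoly _ _).2 hl)), fun z hz => ?_⟩
  rw [map_ofReal_one_kronecker_sub_smul_kronecker_one, ← hasEigenvalue_toLin'_iff_isRoot_charpoly,
    map_add] at hz
  obtain ⟨α, hαS, hαH⟩ := hz.exists_add_of_commute
    (((commute_one_kronecker_kronecker_one _ _).smul_right _).map toLinAlgEquiv')
  have hα : ‖α‖ ≤ q * ε := hS_eig α (hasEigenvalue_of_one_kronecker hαS)
  have hμ_pos : 0 < μ := pos_of_mul_pos_left ((norm_nonneg α).trans hα |>.trans_lt hμc) hc.le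
  rw [map_smul] at hαH
  -- `ν = (z - α) / (-μ)` is an eigenvalue of `H`, and `z = α - μν`.
  have hν := hH _ ((hasEigenvalue_toLin'_iff_isRoot_charpoly _ _).1
    (hasEigenvalue_of_kronecker_one (hαH.of_smul (by simpa using hμ_pos.ne'))))
  rw [← Complex.ofReal_neg, Complex.div_ofReal_re, Complex.sub_re, div_neg, ← neg_div, neg_sub,
    le_div_iff₀ hμ_pos] at hν
  linarith [Complex.re_le_norm α]

/-- Proposition 1 (unknown exosystem matrix): if every eigenvalue of `H` has real
part at least `ε₁^N/(N(2ε₂)^(N-1))`, all entries of `S` are bounded by `ε`, and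
`μ > qεN(2ε₂)^(N-1)/ε₁^N`, then `I_N ⊗ S − μ(H ⊗ I_q)` is Hurwitz; in particular
every eigenvalue `λ` of `S` satisfies `Re λ ≤ qε`. -/
theorem stmt_6 (N q : ℕ) (hN : 1 ≤ N) (hq : 1 ≤ q)
    (ε₁ ε₂ ε : ℝ) (hε₁ : 0 < ε₁) (hε₂ : 0 < ε₂) (hε : 0 < ε)
    (H : Matrix (Fin N) (Fin N) ℝ)
    (hH : ∀ v : ℂ, (H.map Complex.ofReal).charpoly.IsRoot v →
      ε₁ ^ N / (N * (2 * ε₂) ^ (N - 1)) ≤ v.re)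
    (S : Matrix (Fin q) (Fin q) ℝ) (hS : ∀ i j : Fin q, |S i j| ≤ ε)
    (μ : ℝ) (hμ : q * ε * N * (2 * ε₂) ^ (N - 1) / ε₁ ^ N < μ) :
    (∀ l : ℂ, (S.map Complex.ofReal).charpoly.IsRoot l → l.re ≤ q * ε) ∧
    IsHurwitz ((1 : Matrix (Fin N) (Fin N) ℝ) ⊗ₖ S
      - μ • (H ⊗ₖ (1 : Matrix (Fin q) (Fin q) ℝ))) :=
  stmt_6_general N q hN ε₁ ε₂ ε hε₁ hε₂ H hH S hS μ hμ
end

section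
/- Hurwitz condition under strict diagonal dominance (Remark following Proposition 1, inequality (31.444)). Let N, q ≥ 1, let H ∈ ℝ^{N×N} and S ∈ ℝ^{q×q} be real matrices, and let ε̄ > 0 be such that H_{ii} − Σ_{j≠i}|H_{ij}| ≥ ε̄ for every i (strict diagonal dominance). If μ ≥ 0 is a real number such that μ·ε̄ > S_{kk} + Σ_{l≠k}|S_{kl}| for every index k, then the matrix I_N ⊗ S − μ (H ⊗ I_q) is Hurwitz. -/
/-!
By Gershgorin's theorem every complex eigenvalue `z` of a real matrix `M` satisfies
`Re z ≤ M i i + Σ_{j ≠ i} |M i j|` for some row `i`, so it suffices that this bound is negative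
for every row. The matrix `I_N ⊗ S − μ (H ⊗ I_q)` is the Kronecker sum of `−μ H` and `S`: its row
`(i, k)` has diagonal entry `S k k − μ H i i` and off-diagonal absolute sum
`Σ_{l ≠ k} |S k l| + μ Σ_{j ≠ i} |H i j|`, so its bound is
`(S k k + Σ_{l ≠ k} |S k l|) − μ (H i i − Σ_{j ≠ i} |H i j|) < μ ε − μ ε = 0`.
-/

open Matrix
open scoped Kronecker

open Finset

section Gershgorin

variable {ι κ : Type} [Fintype ι] [DecidableEq ι] [Fintype κ] [DecidableEq κ]

def offDiagAbsRowSum (M : Matrix ι ι ℝ) (i : ι) : ℝ :=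
  ∑ j ∈ univ.erase i, |M i j|

lemma offDiagAbsRowSum_smul (c : ℝ) (M : Matrix ι ι ℝ) (i : ι) :
    offDiagAbsRowSum (c • M) i = |c| * offDiagAbsRowSum M i := by
  simp only [offDiagAbsRowSum, Matrix.smul_apply, smul_eq_mul, abs_mul, mul_sum]

lemma offDiagAbsRowSum_eq_sum_ite (M : Matrix ι ι ℝ) (i : ι) :
    offDiagAbsRowSum M i = ∑ j, if j = i then 0 else |M i j| := by
  rw [offDiagAbsRowSum, sum_ite, sum_const_zero, zero_add, filter_ne' univ i]

lemma offDiagAbsRowSum_kroneckerSum (A : Matrix ι ι ℝ) (B : Matrix κ κ ℝ) (i : ι) (k : κ) :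
    offDiagAbsRowSum (A ⊗ₖ (1 : Matrix κ κ ℝ) + (1 : Matrix ι ι ℝ) ⊗ₖ B) (i, k) =
      offDiagAbsRowSum A i + offDiagAbsRowSum B k := by
  have hentry : ∀ j l, (if (j, l) = (i, k) then 0 else
      |(A ⊗ₖ (1 : Matrix κ κ ℝ) + (1 : Matrix ι ι ℝ) ⊗ₖ B) (i, k) (j, l)|) =
      (if l = k then (if j = i then 0 else |A i j|) else 0) +
        (if j = i then (if l = k then 0 else |B k l|) else 0) := by
    intro j l
    rcases eq_or_ne j i with rfl | hj <;> rcases eq_or_ne l k with rfl | hl <;>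
      simp [one_apply, *, Ne.symm]
  rw [offDiagAbsRowSum_eq_sum_ite, Fintype.sum_prod_type]
  simp only [hentry, sum_add_distrib, sum_ite_eq', mem_univ, if_true, sum_ite_irrel,
    sum_const_zero, offDiagAbsRowSum_eq_sum_ite]

lemma exists_re_le_diag_add_offDiagAbsRowSum (M : Matrix ι ι ℝ) {z : ℂ}
    (hz : (M.map Complex.ofReal).charpoly.IsRoot z) :
    ∃ i, z.re ≤ M i i + offDiagAbsRowSum M i := by
  have hev : Module.End.HasEigenvalue (toLin' (M.map Complex.ofReal)) z := by
    rwa [Module.End.hasEigenvalue_iff_isRoot_charpoly, Matrix.charpoly_toLin']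
  obtain ⟨i, hi⟩ := eigenvalue_mem_ball hev
  refine ⟨i, ?_⟩
  rw [mem_closedBall_iff_norm] at hi
  calc z.re = M i i + (z - M i i).re := by simp
    _ ≤ M i i + ‖z - M i i‖ := by gcongr; exact Complex.re_le_norm _
    _ ≤ M i i + offDiagAbsRowSum M i := by
      gcongr
      simpa [offDiagAbsRowSum] using hi

lemma isHurwitz_of_diag_add_offDiagAbsRowSum_neg (M : Matrix ι ι ℝ)
    (h : ∀ i, M i i + offDiagAbsRowSum M i < 0) : IsHurwitz M := fun _ hz =>
  let ⟨i, hi⟩ := exists_re_le_diag_add_offDiagAbsRowSum M hz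
  hi.trans_lt (h i)

end Gershgorin

theorem stmt_7_general (N q : ℕ)
    (H : Matrix (Fin N) (Fin N) ℝ) (S : Matrix (Fin q) (Fin q) ℝ)
    (ε : ℝ)
    (hdom : ∀ i : Fin N, ε ≤ H i i - ∑ j ∈ Finset.univ.erase i, |H i j|)
    (μ : ℝ) (hμ0 : 0 ≤ μ)
    (hμ : ∀ k : Fin q, S k k + ∑ l ∈ Finset.univ.erase k, |S k l| < μ * ε) :
    IsHurwitz ((1 : Matrix (Fin N) (Fin N) ℝ) ⊗ₖ S
      - μ • (H ⊗ₖ (1 : Matrix (Fin q) (Fin q) ℝ))) := by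
  have hsplit : (1 : Matrix (Fin N) (Fin N) ℝ) ⊗ₖ S - μ • (H ⊗ₖ (1 : Matrix (Fin q) (Fin q) ℝ)) =
      ((-μ) • H) ⊗ₖ (1 : Matrix (Fin q) (Fin q) ℝ) + (1 : Matrix (Fin N) (Fin N) ℝ) ⊗ₖ S := by
    rw [smul_kronecker, neg_smul, sub_eq_add_neg, add_comm]
  rw [hsplit]
  refine isHurwitz_of_diag_add_offDiagAbsRowSum_neg _ fun ⟨i, k⟩ => ?_
  rw [offDiagAbsRowSum_kroneckerSum, offDiagAbsRowSum_smul, abs_neg, abs_of_nonneg hμ0]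
  have hH : μ * ε ≤ μ * (H i i - offDiagAbsRowSum H i) := mul_le_mul_of_nonneg_left (hdom i) hμ0
  have hS : S k k + offDiagAbsRowSum S k < μ * ε := hμ k
  simp only [Matrix.add_apply, kroneckerMap_apply, Matrix.smul_apply, one_apply_eq, smul_eq_mul,
    mul_one, one_mul]
  linarith

/-- Hurwitz condition under strict diagonal dominance of `H`: if
`H_{ii} − Σ_{j≠i}|H_{ij}| ≥ ε̄ > 0` for every `i` and `μ ≥ 0` satisfies
`μ ε̄ > S_{kk} + Σ_{l≠k}|S_{kl}|` for every `k`, then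
`I_N ⊗ S − μ (H ⊗ I_q)` is Hurwitz. -/
theorem stmt_7 (N q : ℕ) (hN : 1 ≤ N) (hq : 1 ≤ q)
    (H : Matrix (Fin N) (Fin N) ℝ) (S : Matrix (Fin q) (Fin q) ℝ)
    (ε : ℝ) (hε : 0 < ε)
    (hdom : ∀ i : Fin N, ε ≤ H i i - ∑ j ∈ Finset.univ.erase i, |H i j|)
    (μ : ℝ) (hμ0 : 0 ≤ μ)
    (hμ : ∀ k : Fin q, S k k + ∑ l ∈ Finset.univ.erase k, |S k l| < μ * ε) :
    IsHurwitz ((1 : Matrix (Fin N) (Fin N) ℝ) ⊗ₖ S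
      - μ • (H ⊗ₖ (1 : Matrix (Fin q) (Fin q) ℝ))) :=
  stmt_7_general N q H S ε hdom μ hμ0 hμ
end

section
/- Theorem 4 (data-driven transmission zero condition, sufficiency). Fix T, n, m, p, q ∈ ℕ with n, p ≥ 1. Let X ∈ ℝ^{n×T}, U ∈ ℝ^{m×T}, ℑ ∈ ℝ^{p×T}, V ∈ ℝ^{q×T}, D₁₁ ∈ ℝ^{T×T}, E ∈ ℝ^{n×q}, F ∈ ℝ^{p×q}, S ∈ ℝ^{q×q}, and set G := X·D₁₁ − E·V and Y := ℑ − F·V. Assume: (i) there exists X⁺ ∈ ℝ^{T×n} with X·X⁺ = Iₙ such that G·X⁺ is Hurwitz; and (ii) for every eigenvalue λ ∈ ℂ of S, the complex (n+p)×T matrix obtained by stacking G − λX on top of Y (real matrices viewed in ℂ) has rank n + p. Then for every quadruple (A,B,C,D) ∈ ℝ^{n×n}×ℝ^{n×m}×ℝ^{p×n}×ℝ^{p×m} consistent with the data, i.e. AX + BU = G and CX + DU = Y, the following hold: A + B·(U·X⁺) is Hurwitz, and for every eigenvalue λ ∈ ℂ of S the complex (n+p)×(n+m) block matrix [[A − λIₙ,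 B],[C, D]] has rank n + p (the transmission zero condition). -/
/-!
Right-multiplying the data identity `A X + B U = G` by a right inverse `X⁺` of `X` gives
`A + B (U X⁺) = G X⁺`, so the closed loop inherits the Hurwitz property of `G X⁺`.
For the rank condition, the data identities factor the stacked data matrix as
`[G − λX ; Y] = [[A − λI, B], [C, D]] · [X ; U]`; a factor has at least the rank of the
product and at most as many independent rows as it has rows, hence full row rank `n + p`.
-/

open Matrix

namespace Matrix

variable {R : Type*} {k l m n o : Type*}

theorem add_mul_mul_eq_mul_of_mul_eq_one_s8 [Semiring R] [Fintype l] [Fintype m] [Fintype n]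
    [DecidableEq n] {A : Matrix n n R} {B : Matrix n m R} {X : Matrix n l R}
    {U : Matrix m l R} {G : Matrix n l R} {Xp : Matrix l n R}
    (hAB : A * X + B * U = G) (hX : X * Xp = 1) : A + B * (U * Xp) = G * Xp := by
  rw [← hAB, Matrix.add_mul, Matrix.mul_assoc, hX, Matrix.mul_one, Matrix.mul_assoc]

theorem fromBlocks_sub_smul_one_mul_fromRows [Ring R] [Fintype n] [Fintype m]
    [DecidableEq n] (c : R) (A : Matrix n n R) (B : Matrix n m R) (C : Matrix o n R)
    (D : Matrix o m R) (X : Matrix n l R) (U : Matrix m l R) :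
    fromBlocks (A - c • 1) B C D * fromRows X U =
      fromRows (A * X + B * U - c • X) (C * X + D * U) := by
  rw [fromBlocks_mul_fromRows, Matrix.sub_mul, Matrix.smul_mul, Matrix.one_mul,
    sub_add_eq_add_sub]

theorem rank_eq_card_height_of_rank_mul [CommSemiring R] [StrongRankCondition R] [Fintype m]
    [Fintype k] [Fintype o] {M : Matrix m k R} (N : Matrix k o R)
    (h : (M * N).rank = Fintype.card m) :
    M.rank = Fintype.card m :=
  le_antisymm M.rank_le_card_height (h ▸ rank_mul_le_left M N)

theorem map_add_mul_eq_of_add_mul_eq {S : Type*} [Semiring R] [Semiring S] [Fintype k]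
    [Fintype m] (f : R →+* S) {A : Matrix n k R} {X : Matrix k l R} {B : Matrix n m R}
    {U : Matrix m l R} {G : Matrix n l R} (h : A * X + B * U = G) :
    A.map f * X.map f + B.map f * U.map f = G.map f := by
  rw [← h, Matrix.map_add _ (map_add f), Matrix.map_mul, Matrix.map_mul]

end Matrix

theorem stmt_8_general (T n m p q : ℕ)
    (X : Matrix (Fin n) (Fin T) ℝ) (U : Matrix (Fin m) (Fin T) ℝ)
    (S : Matrix (Fin q) (Fin q) ℝ)
    (G : Matrix (Fin n) (Fin T) ℝ)
    (Y : Matrix (Fin p) (Fin T) ℝ)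
    (Xp : Matrix (Fin T) (Fin n) ℝ) (hXp : X * Xp = 1)
    (hHur : IsHurwitz (G * Xp))
    (hzero : ∀ l : ℂ, (S.map Complex.ofReal).charpoly.IsRoot l →
      (Matrix.fromRows (G.map Complex.ofReal - l • X.map Complex.ofReal)
        (Y.map Complex.ofReal)).rank = n + p) :
    ∀ (A : Matrix (Fin n) (Fin n) ℝ) (B : Matrix (Fin n) (Fin m) ℝ)
      (C : Matrix (Fin p) (Fin n) ℝ) (D : Matrix (Fin p) (Fin m) ℝ),
      A * X + B * U = G → C * X + D * U = Y →
      IsHurwitz (A + B * (U * Xp)) ∧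
      (∀ l : ℂ, (S.map Complex.ofReal).charpoly.IsRoot l →
        (Matrix.fromBlocks (A.map Complex.ofReal - l • (1 : Matrix (Fin n) (Fin n) ℂ))
          (B.map Complex.ofReal) (C.map Complex.ofReal) (D.map Complex.ofReal)).rank
          = n + p) := by
  intro A B C D hABG hCDY
  refine ⟨by rwa [add_mul_mul_eq_mul_of_mul_eq_one_s8 hABG hXp], fun l hl => ?_⟩
  have hG : A.map Complex.ofReal * X.map Complex.ofReal
      + B.map Complex.ofReal * U.map Complex.ofReal = G.map Complex.ofReal :=
    map_add_mul_eq_of_add_mul_eq Complex.ofRealHom hABG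
  have hY : C.map Complex.ofReal * X.map Complex.ofReal
      + D.map Complex.ofReal * U.map Complex.ofReal = Y.map Complex.ofReal :=
    map_add_mul_eq_of_add_mul_eq Complex.ofRealHom hCDY
  have hfull := hzero l hl
  rw [← hG, ← hY, ← fromBlocks_sub_smul_one_mul_fromRows] at hfull
  simpa using rank_eq_card_height_of_rank_mul _ (hfull.trans (by simp))

/-- Theorem 4 (data-driven transmission zero condition, sufficiency): if there is
a right inverse `X⁺` of `X` with `G X⁺` Hurwitz, and for every eigenvalue `λ` of
`S` the stacked data matrix `[G − λX ; Y]` has full row rank `n + p`, then every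
system `(A,B,C,D)` consistent with the data satisfies: `A + B (U X⁺)` is Hurwitz
and the transmission zero condition `rank [[A − λI, B],[C, D]] = n + p` holds for
every eigenvalue `λ` of `S`. -/
theorem stmt_8 (T n m p q : ℕ) (hn : 1 ≤ n) (hp : 1 ≤ p)
    (X : Matrix (Fin n) (Fin T) ℝ) (U : Matrix (Fin m) (Fin T) ℝ)
    (Im : Matrix (Fin p) (Fin T) ℝ) (V : Matrix (Fin q) (Fin T) ℝ)
    (D11 : Matrix (Fin T) (Fin T) ℝ)
    (E : Matrix (Fin n) (Fin q) ℝ) (F : Matrix (Fin p) (Fin q) ℝ)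
    (S : Matrix (Fin q) (Fin q) ℝ)
    (G : Matrix (Fin n) (Fin T) ℝ) (hG : G = X * D11 - E * V)
    (Y : Matrix (Fin p) (Fin T) ℝ) (hY : Y = Im - F * V)
    (Xp : Matrix (Fin T) (Fin n) ℝ) (hXp : X * Xp = 1)
    (hHur : IsHurwitz (G * Xp))
    (hzero : ∀ l : ℂ, (S.map Complex.ofReal).charpoly.IsRoot l →
      (Matrix.fromRows (G.map Complex.ofReal - l • X.map Complex.ofReal)
        (Y.map Complex.ofReal)).rank = n + p) :
    ∀ (A : Matrix (Fin n) (Fin n) ℝ) (B : Matrix (Fin n) (Fin m) ℝ)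
      (C : Matrix (Fin p) (Fin n) ℝ) (D : Matrix (Fin p) (Fin m) ℝ),
      A * X + B * U = G → C * X + D * U = Y →
      IsHurwitz (A + B * (U * Xp)) ∧
      (∀ l : ℂ, (S.map Complex.ofReal).charpoly.IsRoot l →
        (Matrix.fromBlocks (A.map Complex.ofReal - l • (1 : Matrix (Fin n) (Fin n) ℂ))
          (B.map Complex.ofReal) (C.map Complex.ofReal) (D.map Complex.ofReal)).rank
          = n + p) :=
  stmt_8_general T n m p q X U S G Y Xp hXp hHur hzero
end

section
/- Theorem 5, sufficiency direction (data-driven regulator equations). Fix T, n, m, p, q ∈ ℕ. Let X ∈ ℝ^{n×T}, U ∈ ℝ^{m×T}, ℑ ∈ ℝ^{p×T}, V ∈ ℝ^{q×T}, D₁₁ ∈ ℝ^{T×T}, E ∈ ℝ^{n×q}, F ∈ ℝ^{p×q}, S ∈ ℝ^{q×q}, and set G := X·D₁₁ − E·V and Y := ℑ − F·V. Suppose M ∈ ℝ^{T×q} solves the data-driven regulator equations G·M = X·M·S − E and Y·M = −F. Then for every quadruple (A,B,C,D) with AX + BU = G and CX + DU = Y, the matrices Π := X·M and Γ := U·M solve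 the regulator equations Π·S = A·Π + B·Γ + E and 0 = C·Π + D·Γ + F. Moreover, for any K₁ ∈ ℝ^{m×n}, the matrix K₂ := (U − K₁·X)·M satisfies Γ = K₁·Π + K₂. -/
/-! Right-multiplying the consistency relations `A X + B U = G` and `C X + D U = Y` by `M` turns
the data-driven regulator equations for `M` into the model-based ones for `Π = X M`, `Γ = U M`. -/

section

variable {R : Type*} [Ring R] {n m p q t : Type*}

theorem regulator_state_eq_of_data [Fintype n] [Fintype m] [Fintype q] [Fintype t]
    {A : Matrix n n R} {B : Matrix n m R} {X G : Matrix n t R}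
    {U : Matrix m t R} {M : Matrix t q R} {S : Matrix q q R} {E : Matrix n q R}
    (hdata : A * X + B * U = G) (hM : G * M = X * M * S - E) :
    X * M * S = A * (X * M) + B * (U * M) + E := by
  rw [← Matrix.mul_assoc, ← Matrix.mul_assoc, ← Matrix.add_mul, hdata, hM, sub_add_cancel]

theorem regulator_output_eq_of_data [Fintype n] [Fintype m] [Fintype t]
    {C : Matrix p n R} {D : Matrix p m R} {X : Matrix n t R} {U : Matrix m t R}
    {Y : Matrix p t R} {M : Matrix t q R} {F : Matrix p q R}
    (hdata : C * X + D * U = Y) (hM : Y * M = -F) :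
    0 = C * (X * M) + D * (U * M) + F := by
  rw [← Matrix.mul_assoc, ← Matrix.mul_assoc, ← Matrix.add_mul, hdata, hM, neg_add_cancel]

theorem mul_eq_mul_mul_add_sub_mul_mul [Fintype n] [Fintype t]
    (X : Matrix n t R) (U : Matrix m t R) (M : Matrix t q R) (K : Matrix m n R) :
    U * M = K * (X * M) + (U - K * X) * M := by
  rw [Matrix.sub_mul, Matrix.mul_assoc, add_sub_cancel]

end

theorem stmt_9_general (T n m p q : ℕ)
    (X : Matrix (Fin n) (Fin T) ℝ) (U : Matrix (Fin m) (Fin T) ℝ)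
    (E : Matrix (Fin n) (Fin q) ℝ) (F : Matrix (Fin p) (Fin q) ℝ)
    (S : Matrix (Fin q) (Fin q) ℝ)
    (G : Matrix (Fin n) (Fin T) ℝ)
    (Y : Matrix (Fin p) (Fin T) ℝ)
    (M : Matrix (Fin T) (Fin q) ℝ)
    (hM1 : G * M = X * M * S - E) (hM2 : Y * M = -F) :
    ∀ (A : Matrix (Fin n) (Fin n) ℝ) (B : Matrix (Fin n) (Fin m) ℝ)
      (C : Matrix (Fin p) (Fin n) ℝ) (D : Matrix (Fin p) (Fin m) ℝ),
      A * X + B * U = G → C * X + D * U = Y →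
      (X * M) * S = A * (X * M) + B * (U * M) + E ∧
      (0 : Matrix (Fin p) (Fin q) ℝ) = C * (X * M) + D * (U * M) + F ∧
      (∀ K₁ : Matrix (Fin m) (Fin n) ℝ,
        U * M = K₁ * (X * M) + (U - K₁ * X) * M) :=
  fun _ _ _ _ hAB hCD =>
    ⟨regulator_state_eq_of_data hAB hM1, regulator_output_eq_of_data hCD hM2,
      mul_eq_mul_mul_add_sub_mul_mul X U M⟩

/-- Theorem 5, sufficiency direction: if `M` solves the data-driven regulator
equations, then for every system `(A,B,C,D)` consistent with the data, the
matrices `Π = X M` and `Γ = U M` solve the regulator equations, and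
`K₂ = (U − K₁ X) M` satisfies `Γ = K₁ Π + K₂` for any `K₁`. -/
theorem stmt_9 (T n m p q : ℕ)
    (X : Matrix (Fin n) (Fin T) ℝ) (U : Matrix (Fin m) (Fin T) ℝ)
    (Im : Matrix (Fin p) (Fin T) ℝ) (V : Matrix (Fin q) (Fin T) ℝ)
    (D11 : Matrix (Fin T) (Fin T) ℝ)
    (E : Matrix (Fin n) (Fin q) ℝ) (F : Matrix (Fin p) (Fin q) ℝ)
    (S : Matrix (Fin q) (Fin q) ℝ)
    (G : Matrix (Fin n) (Fin T) ℝ) (hG : G = X * D11 - E * V)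
    (Y : Matrix (Fin p) (Fin T) ℝ) (hY : Y = Im - F * V)
    (M : Matrix (Fin T) (Fin q) ℝ)
    (hM1 : G * M = X * M * S - E) (hM2 : Y * M = -F) :
    ∀ (A : Matrix (Fin n) (Fin n) ℝ) (B : Matrix (Fin n) (Fin m) ℝ)
      (C : Matrix (Fin p) (Fin n) ℝ) (D : Matrix (Fin p) (Fin m) ℝ),
      A * X + B * U = G → C * X + D * U = Y →
      (X * M) * S = A * (X * M) + B * (U * M) + E ∧
      (0 : Matrix (Fin p) (Fin q) ℝ) = C * (X * M) + D * (U * M) + F ∧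
      (∀ K₁ : Matrix (Fin m) (Fin n) ℝ,
        U * M = K₁ * (X * M) + (U - K₁ * X) * M) :=
  stmt_9_general T n m p q X U E F S G Y M hM1 hM2
end

section
/- Corollary 1 (data-driven output synchronization with unknown leader, sufficiency). Fix T, n, m, p, n₀ ∈ ℕ. Let X ∈ ℝ^{n×T}, U ∈ ℝ^{m×T}, Y ∈ ℝ^{p×T} be the follower data, let X₀ ∈ ℝ^{n₀×T}, Y₀ ∈ ℝ^{p×T} be the leader data, and let D₁₁ ∈ ℝ^{T×T}. Suppose X₀ admits a right inverse X₀⁺ ∈ ℝ^{T×n₀} with X₀·X₀⁺ = I_{n₀}, and suppose M ∈ ℝ^{T×n₀} solves X·D₁₁·M = X·M·(X₀·D₁₁·X₀⁺) and Y·M = Y₀·X₀⁺. Then for every follower quadruple (A,B,C,D) with AX + BU = X·D₁₁ and CX + DU = Y, and every leader pair (A₀, C₀) with A₀·X₀ = X₀·D₁₁ and C₀·X₀ = Y₀, the matrices Π := X·M and Γ := U·M solve the output-synchronization regulator equations Π·A₀ = A·Π + B·Γ and C₀ = C·Π + D·Γ. -/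
/-!
A consistent leader is pinned down by its data once `X₀` has a right inverse `X₀⁺`:
`A₀ = X₀ D₁₁ X₀⁺` and `C₀ = Y₀ X₀⁺`. The conditions on `M` are then the regulator equations
written in data form, and multiplying the follower's data equations `A X + B U = X D₁₁`,
`C X + D U = Y` on the right by `M` turns them into `Π A₀ = A Π + B Γ` and `C₀ = C Π + D Γ`.
-/

open Matrix

namespace Matrix

variable {R : Type*} [Semiring R] {k l m n : Type*} [Fintype l] [Fintype m] [Fintype n]

theorem eq_mul_of_mul_eq_of_mul_eq_one [DecidableEq m] {F : Matrix k m R} {X : Matrix m n R}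
    {Z : Matrix k n R} {Xr : Matrix n m R} (hXr : X * Xr = 1) (hF : F * X = Z) :
    F = Z * Xr := by
  rw [← hF, Matrix.mul_assoc, hXr, Matrix.mul_one]

theorem mul_right_of_add_mul_eq {A : Matrix k m R} {X : Matrix m n R} {B : Matrix k l R}
    {U : Matrix l n R} {Z : Matrix k n R} (h : A * X + B * U = Z) {o : Type*}
    (M : Matrix n o R) : Z * M = A * (X * M) + B * (U * M) := by
  rw [← h, Matrix.add_mul, Matrix.mul_assoc, Matrix.mul_assoc]

end Matrix

/-- Corollary 1 (data-driven output synchronization with unknown leader,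
sufficiency): if `X₀` has a right inverse `X₀⁺` and `M` solves the data-driven
synchronization regulator equations, then for every consistent follower
`(A,B,C,D)` and every consistent leader `(A₀,C₀)`, the matrices `Π = X M` and
`Γ = U M` solve `Π A₀ = A Π + B Γ` and `C₀ = C Π + D Γ`. -/
theorem stmt_11 (T n m p n₀ : ℕ)
    (X : Matrix (Fin n) (Fin T) ℝ) (U : Matrix (Fin m) (Fin T) ℝ)
    (Y : Matrix (Fin p) (Fin T) ℝ)
    (X₀ : Matrix (Fin n₀) (Fin T) ℝ) (Y₀ : Matrix (Fin p) (Fin T) ℝ)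
    (D11 : Matrix (Fin T) (Fin T) ℝ)
    (X₀p : Matrix (Fin T) (Fin n₀) ℝ) (hX₀p : X₀ * X₀p = 1)
    (M : Matrix (Fin T) (Fin n₀) ℝ)
    (hM1 : X * D11 * M = X * M * (X₀ * D11 * X₀p))
    (hM2 : Y * M = Y₀ * X₀p) :
    ∀ (A : Matrix (Fin n) (Fin n) ℝ) (B : Matrix (Fin n) (Fin m) ℝ)
      (C : Matrix (Fin p) (Fin n) ℝ) (D : Matrix (Fin p) (Fin m) ℝ)
      (A₀ : Matrix (Fin n₀) (Fin n₀) ℝ) (C₀ : Matrix (Fin p) (Fin n₀) ℝ),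
      A * X + B * U = X * D11 → C * X + D * U = Y →
      A₀ * X₀ = X₀ * D11 → C₀ * X₀ = Y₀ →
      (X * M) * A₀ = A * (X * M) + B * (U * M) ∧
      C₀ = C * (X * M) + D * (U * M) := by
  intro A B C D A₀ C₀ hState hOutput hLeaderState hLeaderOutput
  have hA₀ : A₀ = X₀ * D11 * X₀p := eq_mul_of_mul_eq_of_mul_eq_one hX₀p hLeaderState
  have hC₀ : C₀ = Y₀ * X₀p := eq_mul_of_mul_eq_of_mul_eq_one hX₀p hLeaderOutput
  constructor
  · rw [hA₀, ← hM1]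
    exact mul_right_of_add_mul_eq hState M
  · rw [hC₀, ← hM2]
    exact mul_right_of_add_mul_eq hOutput M
end
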